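/- arXiv:1603.02177 — 7 statements merged into one kernel-verified Lean document; each statement's English description precedes it below -/
import Mathlib

section
/- Let G be a finite group in which |ab| = |a|·|b| whenever the elements a, b have coprime orders. Then G is nilpotent. -/
/-!
If `d * e = |G|` with `d` and `e` coprime, then `x ^ d = 1` has at most `d` solutions. For `e = 1`
this is trivial; otherwise take a Sylow `p`-subgroup `P` for a prime `p ∣ e`. The hypothesis makes
`(y, x) ↦ y * x` an injection from `P` times the solutions of `x ^ d = 1` into the solutions of
`x ^ (|P| * d) = 1`, and `|P| * d` is again such a divisor with a smaller cofactor. For `d = |P|`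
the bound says that the `p`-elements are exactly the elements of `P`, so `P` is normal, and a
finite group all of whose Sylow subgroups are normal is nilpotent.
-/

open Nat Subgroup

def CoprimeOrderMul (G : Type*) [Group G] : Prop :=
  ∀ a b : G, Coprime (orderOf a) (orderOf b) → orderOf (a * b) = orderOf a * orderOf b

namespace CoprimeOrderMul

variable {G : Type*} [Group G]

theorem eq_one_of_mul_pow_eq_one (hG : CoprimeOrderMul G) {n d : ℕ} (hnd : n.Coprime d)
    {g x : G} (hg : g ^ n = 1) (hx : x ^ d = 1) (hgx : (g * x) ^ d = 1) : g = 1 := by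
  have hcop : (orderOf g).Coprime (orderOf x) :=
    (hnd.coprime_dvd_left (orderOf_dvd_of_pow_eq_one hg)).coprime_dvd_right
      (orderOf_dvd_of_pow_eq_one hx)
  have hgd : orderOf g ∣ d :=
    (Dvd.intro _ (hG g x hcop).symm).trans (orderOf_dvd_of_pow_eq_one hgx)
  exact orderOf_eq_one_iff.mp (eq_one_of_dvd_coprimes hnd (orderOf_dvd_of_pow_eq_one hg) hgd)

variable [Finite G]

theorem card_mul_card_pow_eq_one_le (hG : CoprimeOrderMul G) (H : Subgroup G) {d : ℕ}
    (hd : (Nat.card H).Coprime d) :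
    Nat.card H * Nat.card {x : G // x ^ d = 1} ≤
      Nat.card {x : G // x ^ (Nat.card H * d) = 1} := by
  have hH : ∀ y : H, (y : G) ^ Nat.card H = 1 := fun y => by
    rw [← coe_pow, pow_card_eq_one', coe_one]
  have hpow (y : H) (x : {x : G // x ^ d = 1}) : ((y : G) * x) ^ (Nat.card H * d) = 1 := by
    have hcop := (hd.coprime_dvd_left (orderOf_dvd_of_pow_eq_one (hH y))).coprime_dvd_right
      (orderOf_dvd_of_pow_eq_one x.2)
    rw [← orderOf_dvd_iff_pow_eq_one, hG _ _ hcop]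
    exact mul_dvd_mul (orderOf_dvd_of_pow_eq_one (hH y)) (orderOf_dvd_of_pow_eq_one x.2)
  let f : H × {x : G // x ^ d = 1} → {x : G // x ^ (Nat.card H * d) = 1} :=
    fun z => ⟨z.1 * z.2, hpow z.1 z.2⟩
  have hf : Function.Injective f := by
    rintro ⟨y₁, x₁⟩ ⟨y₂, x₂⟩ hf₁₂
    have heq : (y₁ : G) * x₁ = y₂ * x₂ := congrArg Subtype.val hf₁₂
    have hx₂ : ((y₂⁻¹ * y₁ : H) : G) * x₁ = x₂ := by
      rw [coe_mul, coe_inv, mul_assoc, heq, inv_mul_cancel_left]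
    have hy : y₂⁻¹ * y₁ = 1 :=
      Subtype.ext (hG.eq_one_of_mul_pow_eq_one hd (hH _) x₁.2 (hx₂ ▸ x₂.2))
    rw [hy, coe_one, one_mul] at hx₂
    rw [inv_mul_eq_one.mp hy, Subtype.ext hx₂]
  rw [← Nat.card_prod]
  exact Nat.card_le_card_of_injective f hf

theorem card_pow_eq_one_le (hG : CoprimeOrderMul G) {d e : ℕ} (hde : d * e = Nat.card G)
    (hcop : d.Coprime e) : Nat.card {x : G // x ^ d = 1} ≤ d := by
  induction e using Nat.strong_induction_on generalizing d with
  | _ e ih =>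
  rcases eq_or_ne e 1 with rfl | he
  · rw [mul_one] at hde
    exact hde ▸ Finite.card_subtype_le _
  obtain ⟨p, hp, hpe⟩ := Nat.exists_prime_and_dvd he
  have : Fact p.Prime := ⟨hp⟩
  obtain ⟨P⟩ : Nonempty (Sylow p G) := inferInstance
  have hd0 : d ≠ 0 := left_ne_zero_of_mul (hde ▸ Nat.card_pos.ne')
  have he0 : e ≠ 0 := right_ne_zero_of_mul (hde ▸ Nat.card_pos.ne')
  have hpd : ¬ p ∣ d := fun hpd => hp.one_lt.ne' (eq_one_of_dvd_coprimes hcop hpd hpe)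
  have hP : Nat.card P = ordProj[p] e := by
    rw [P.card_eq_multiplicity, ← hde, Nat.factorization_mul hd0 he0, Finsupp.add_apply,
      factorization_eq_zero_of_not_dvd hpd, zero_add]
  have hlt : ordCompl[p] e < e :=
    Nat.div_lt_self (pos_of_ne_zero he0)
      (Nat.one_lt_pow (hp.factorization_pos_of_dvd he0 hpe).ne' hp.one_lt)
  have key := hG.card_mul_card_pow_eq_one_le P
    (hP ▸ ((Nat.Prime.coprime_iff_not_dvd hp).mpr hpd).pow_left _)
  rw [hP] at key
  have hbound := ih _ hlt (d := ordProj[p] e * d)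
    (by rw [mul_comm _ d, mul_assoc, ordProj_mul_ordCompl_eq_self, hde])
    (Nat.Coprime.mul_left ((coprime_ordCompl hp he0).pow_left _)
      (hcop.coprime_dvd_right (ordCompl_dvd e p)))
  exact Nat.le_of_mul_le_mul_left (key.trans hbound) (pow_pos hp.pos _)

theorem mem_sylow_of_pow_card_eq_one (hG : CoprimeOrderMul G) {p : ℕ} [Fact p.Prime]
    (P : Sylow p G) {x : G} (hx : x ^ Nat.card P = 1) : x ∈ P := by
  have hcard : Nat.card {x : G // x ^ Nat.card P = 1} ≤ Nat.card P := by
    refine hG.card_pow_eq_one_le (e := ordCompl[p] (Nat.card G)) ?_ ?_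
    · rw [P.card_eq_multiplicity, ordProj_mul_ordCompl_eq_self]
    · rw [P.card_eq_multiplicity]
      exact (coprime_ordCompl Fact.out Nat.card_pos.ne').pow_left _
  have hsub : (P : Set G) ⊆ {x | x ^ Nat.card P = 1} := fun y hy => by
    rw [Set.mem_ofPred_eq, ← coe_mk _ y hy, ← coe_pow, pow_card_eq_one', coe_one]
  have heq := Set.eq_of_subset_of_ncard_le hsub (by rwa [← Nat.card_coe_set_eq])
  rw [← SetLike.mem_coe, heq]
  exact hx

theorem normal_sylow (hG : CoprimeOrderMul G) {p : ℕ} [Fact p.Prime] (P : Sylow p G) :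
    (P : Subgroup G).Normal where
  conj_mem y hy g := hG.mem_sylow_of_pow_card_eq_one P <| by
    rw [conj_pow, ← coe_mk _ y hy, ← coe_pow, pow_card_eq_one', coe_one, mul_one,
      mul_inv_cancel]

end CoprimeOrderMul

theorem baumslag_wiegold (G : Type*) [Group G] [Finite G]
    (h : ∀ a b : G, Nat.Coprime (orderOf a) (orderOf b) →
      orderOf (a * b) = orderOf a * orderOf b) :
    Group.IsNilpotent G := by
  refine ((Group.isNilpotent_of_finite_tfae (G := G)).out 0 3).mpr ?_
  intro p _ P
  exact CoprimeOrderMul.normal_sylow h P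
end

section
/- Let G be a finite group in which |ab| = |a|·|b| whenever a and b are commutators of coprime orders. Let x be a commutator in G and let N be a subgroup of G normalized by x with gcd(|x|, |N|) = 1. Then [x, N] = 1, i.e., x centralizes N. -/
/-!
Put `c = ⁅x⁻¹, n⁆ = x⁻¹ n x n⁻¹` for `n ∈ N`. Since `x` normalizes `N`, `c` lies in `N`, so `c` is a
commutator of order coprime to `|x|`. But `x c = n x n⁻¹` is conjugate to `x`, so the hypothesis
gives `|x| = |x c| = |x| |c|`, whence `c = 1`, i.e. `x` commutes with `n`.
-/

open scoped commutatorElement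

namespace Subgroup

variable {G : Type*} [Group G]

theorem commutatorElement_mem_of_mem_normalizer {N : Subgroup G} {g n : G}
    (hg : g ∈ normalizer (N : Set G)) (hn : n ∈ N) : ⁅g, n⁆ ∈ N := by
  rw [commutatorElement_def]
  exact mul_mem ((mem_normalizer_iff.mp hg n).mp hn) (inv_mem hn)

end Subgroup

theorem mul_commutatorElement_inv_left {G : Type*} [Group G] (x n : G) :
    x * ⁅x⁻¹, n⁆ = n * x * n⁻¹ := by
  simp only [commutatorElement_def, inv_inv, mul_assoc, mul_inv_cancel_left]

theorem orderOf_conj {G : Type*} [Group G] (n x : G) : orderOf (n * x * n⁻¹) = orderOf x :=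
  (MulAut.conj n).orderOf_eq x

theorem commutator_centralizes_coprime_normalized (G : Type*) [Group G] [Finite G]
    (h : ∀ a b : G, (∃ x y : G, a = ⁅x, y⁆) → (∃ x y : G, b = ⁅x, y⁆) →
      Nat.Coprime (orderOf a) (orderOf b) →
      orderOf (a * b) = orderOf a * orderOf b)
    (x : G) (hx : ∃ u v : G, x = ⁅u, v⁆)
    (N : Subgroup G) (hnorm : x ∈ Subgroup.normalizer (N : Set G))
    (hcop : Nat.Coprime (orderOf x) (Nat.card N)) :
    ∀ n ∈ N, x * n = n * x := by
  intro n hn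
  have hcN : ⁅x⁻¹, n⁆ ∈ N := N.commutatorElement_mem_of_mem_normalizer (inv_mem hnorm) hn
  have hcop_c : Nat.Coprime (orderOf x) (orderOf ⁅x⁻¹, n⁆) :=
    hcop.coprime_dvd_right (N.orderOf_dvd_natCard hcN)
  have horder : orderOf x * orderOf ⁅x⁻¹, n⁆ = orderOf x := by
    rw [← h x _ hx ⟨x⁻¹, n, rfl⟩ hcop_c, mul_commutatorElement_inv_left, orderOf_conj]
  have hc : ⁅x⁻¹, n⁆ = 1 :=
    orderOf_eq_one_iff.mp ((Nat.mul_eq_left (orderOf_pos x).ne').mp horder)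
  exact Commute.inv_left_iff.mp (commutatorElement_eq_one_iff_commute.mp hc)
end

section
/- Let G be a finite group in which |ab| = |a|·|b| whenever a and b are commutators of coprime orders. If G is soluble, then G' is nilpotent. -/
/-!
Induct on `|G|`: the hypothesis passes to `G'`, so `G''` is nilpotent, and it suffices that every
Sylow `q`-subgroup `Q` of `G'` is normal in `G'`. By the focal subgroup theorem, `Q` lies in the
subgroup generated by the commutators of `q`-power order. For such a commutator `c` and a
`p`-element `w` of the nilpotent group `G''` (`p ≠ q`), `⁅w, c⁆` is again a `p`-element, and
`⁅w, c⁆ * c` is conjugate to `c`; the hypothesis then forces `⁅w, c⁆ = 1`. So the `p`-elements of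
`G''` centralise `Q` while its `q`-elements lie in `Q`; hence `G''` normalises `Q`, the normaliser
of `Q` is normal in `G'`, and so is `Q`.
-/

open scoped commutatorElement

section

open Subgroup

def CoprimeCommutatorOrdersMultiply (G : Type*) [Group G] : Prop :=
  ∀ a b : G, (∃ x y : G, a = ⁅x, y⁆) → (∃ x y : G, b = ⁅x, y⁆) →
    Nat.Coprime (orderOf a) (orderOf b) → orderOf (a * b) = orderOf a * orderOf b

def commutatorsOfPowOrder (G : Type*) [Group G] (q : ℕ) : Set G :=
  {c | (∃ a b : G, c = ⁅a, b⁆) ∧ ∃ j, orderOf c = q ^ j}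

variable {G : Type*} [Group G]

theorem mem_of_forall_isPrimePow_orderOf {H N : Subgroup G}
    (hH : ∀ x ∈ N, IsPrimePow (orderOf x) → x ∈ H) {g : G} (hgN : g ∈ N) (hg : IsOfFinOrder g) :
    g ∈ H := by
  suffices ∀ n, n ≠ 0 → ∀ g ∈ N, orderOf g = n → g ∈ H from this _ hg.orderOf_pos.ne' g hgN rfl
  intro n
  induction n using Nat.recOnPosPrimePosCoprime with
  | prime_pow p k hp hk => exact fun _ g hgN hg => hH g hgN (hg ▸ ⟨p, k, hp.prime, hk, rfl⟩)
  | zero => exact fun h => absurd rfl h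
  | one => exact fun _ g _ hg => orderOf_eq_one_iff.mp hg ▸ H.one_mem
  | coprime a b ha hb hab iha ihb =>
    intro _ g hgN hg
    have hga : orderOf (g ^ a) = b := by
      rw [orderOf_pow_of_dvd (by omega) (hg ▸ dvd_mul_right a b), hg,
        Nat.mul_div_cancel_left _ (by omega)]
    have hgb : orderOf (g ^ b) = a := by
      rw [orderOf_pow_of_dvd (by omega) (hg ▸ dvd_mul_left b a), hg,
        Nat.mul_div_cancel _ (by omega)]
    obtain ⟨u, v, huv⟩ := Nat.isCoprime_iff_coprime.mpr hab
    have hsplit : g = (g ^ a) ^ u * (g ^ b) ^ v := by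
      rw [← zpow_natCast, ← zpow_natCast, ← zpow_mul, ← zpow_mul, ← zpow_add, mul_comm (a : ℤ),
        mul_comm (b : ℤ), huv, zpow_one]
    rw [hsplit]
    exact mul_mem (zpow_mem (ihb (by omega) _ (pow_mem hgN a) hga) u)
      (zpow_mem (iha (by omega) _ (pow_mem hgN b) hgb) v)

section Finite

variable [Finite G] {p : ℕ} [Fact p.Prime]

theorem Sylow.mem_of_orderOf_eq_pow (P : Sylow p G) [P.Normal] {g : G} {k : ℕ}
    (hg : orderOf g = p ^ k) : g ∈ P := by
  obtain ⟨R, hR⟩ := (IsPGroup.of_card (by rw [Nat.card_zpowers, hg]) :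
    IsPGroup p (zpowers g)).exists_le_sylow
  have := Sylow.unique_of_normal P ‹_›
  exact Subsingleton.elim R P ▸ hR (mem_zpowers g)

theorem exists_orderOf_commutatorElement_eq_pow {N : Subgroup G} [N.Normal] [Group.IsNilpotent N]
    {w : G} (hw : w ∈ N) {k : ℕ} (hwk : orderOf w = p ^ k) (g : G) :
    ∃ i, orderOf ⁅w, g⁆ = p ^ i := by
  obtain ⟨S⟩ : Nonempty (Sylow p N) := inferInstance
  have hS : ∀ x (hx : x ∈ N), orderOf x = p ^ k → (⟨x, hx⟩ : N) ∈ S := fun x hx hxk =>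
    S.mem_of_orderOf_eq_pow (by rwa [Subgroup.orderOf_mk])
  have hconj : g * w⁻¹ * g⁻¹ ∈ N := ‹N.Normal›.conj_mem _ (inv_mem hw) g
  have hconjk : orderOf (g * w⁻¹ * g⁻¹) = p ^ k := by
    rw [← SemiconjBy.orderOf_eq g (x := w⁻¹) (by simp [SemiconjBy, mul_assoc]), orderOf_inv, hwk]
  obtain ⟨i, hi⟩ :=
    IsPGroup.iff_orderOf.mp S.isPGroup' ⟨_, mul_mem (hS w hw hwk) (hS _ hconj hconjk)⟩
  refine ⟨i, ?_⟩
  rw [commutatorElement_def, mul_assoc w, mul_assoc w]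
  simpa only [Subgroup.orderOf_mk, ← Subgroup.orderOf_coe, Subgroup.coe_mul] using hi

theorem Sylow.mem_of_mem_of_isNilpotent (Q : Sylow p G) {N : Subgroup G} [N.Normal]
    [Group.IsNilpotent N] {z : G} (hz : z ∈ N) {k : ℕ} (hzk : orderOf z = p ^ k) : z ∈ Q := by
  obtain ⟨S⟩ : Nonempty (Sylow p N) := inferInstance
  have := S.characteristic_of_normal inferInstance
  refine (S.isPGroup'.map N.subtype).le_sylow_of_normal Q ⟨⟨z, hz⟩, ?_, rfl⟩
  exact S.mem_of_orderOf_eq_pow (by rwa [Subgroup.orderOf_mk])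

theorem mem_closure_commutatorsOfPowOrder {x : G} (hx : x ∈ commutator G) {k : ℕ}
    (hxk : orderOf x = p ^ k) : x ∈ closure (commutatorsOfPowOrder G p) := by
  obtain ⟨P, hP⟩ := (IsPGroup.of_card (by rw [Nat.card_zpowers, hxk]) :
    IsPGroup p (zpowers x)).exists_le_sylow
  have hfocal : x ∈ P.focalSubgroup := by
    rw [← commutator_inf_eq_focalSubgroup]
    exact ⟨hx, hP (mem_zpowers x)⟩
  refine closure_mono ?_ hfocal
  rintro g ⟨hgP, y, -, u, rfl⟩
  obtain ⟨j, hj⟩ := IsPGroup.iff_orderOf.mp P.isPGroup' ⟨_, hgP⟩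
  exact ⟨⟨y, u, rfl⟩, j, by rwa [Subgroup.orderOf_mk] at hj⟩

end Finite

namespace CoprimeCommutatorOrdersMultiply

theorem subgroup (hG : CoprimeCommutatorOrdersMultiply G) (H : Subgroup G) :
    CoprimeCommutatorOrdersMultiply H := by
  rintro a b ⟨x, y, rfl⟩ ⟨u, v, rfl⟩ hab
  simp only [← Subgroup.orderOf_coe] at hab ⊢
  exact hG _ _ ⟨x, y, rfl⟩ ⟨u, v, rfl⟩ hab

theorem commute (hG : CoprimeCommutatorOrdersMultiply G) {w c : G} (hc : ∃ x y : G, c = ⁅x, y⁆)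
    (hcop : Nat.Coprime (orderOf ⁅w, c⁆) (orderOf c)) : Commute w c := by
  have hconj : orderOf (⁅w, c⁆ * c) = orderOf c := by
    rw [commutatorElement_def, inv_mul_cancel_right]
    exact (SemiconjBy.orderOf_eq w (by simp [SemiconjBy, mul_assoc])).symm
  have h := hG _ _ ⟨w, c, rfl⟩ hc hcop
  rw [hconj] at h
  exact commutatorElement_eq_one_iff_commute.mp
    (orderOf_eq_one_iff.mp (hcop.eq_one_of_dvd (Dvd.intro _ h.symm)))

theorem commute_of_mem_commutator_commutator [Finite G] (hG : CoprimeCommutatorOrdersMultiply G)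
    [Group.IsNilpotent (commutator (commutator G))]
    {p q : ℕ} [Fact p.Prime] [Fact q.Prime] (hpq : p ≠ q) {z : commutator G}
    (hz : z ∈ commutator (commutator G)) {k : ℕ} (hzk : orderOf z = p ^ k) {x : G}
    (hx : x ∈ closure (commutatorsOfPowOrder G q)) : Commute (z : G) x := by
  suffices closure (commutatorsOfPowOrder G q) ≤ centralizer {(z : G)} from
    (mem_centralizer_singleton_iff.mp (this hx)).symm
  rw [closure_le]
  rintro c ⟨⟨a, b, hab⟩, j, hcj⟩
  have hcK : c ∈ commutator G := hab ▸ commutator_mem_commutator (mem_top a) (mem_top b)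
  obtain ⟨i, hi⟩ := exists_orderOf_commutatorElement_eq_pow hz hzk ⟨c, hcK⟩
  have hzc : Commute (z : G) c := hG.commute ⟨a, b, hab⟩ (by
    rw [hcj, show ⁅(z : G), c⁆ = (⁅z, ⟨c, hcK⟩⁆ : commutator G) from rfl, Subgroup.orderOf_coe,
      hi]
    exact Nat.coprime_pow_primes _ _ Fact.out Fact.out hpq)
  exact mem_centralizer_singleton_iff.mpr hzc.symm.eq

theorem isNilpotent_commutator_of_isNilpotent [Finite G]
    (hG : CoprimeCommutatorOrdersMultiply G) [Group.IsNilpotent (commutator (commutator G))] :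
    Group.IsNilpotent (commutator G) := by
  refine (Group.isNilpotent_of_finite_tfae.out 3 0).mp ?_
  intro q _ Q
  refine Q.normal_of_normalizer_normal (.of_commutator_le _ fun z hz => ?_)
  refine mem_of_forall_isPrimePow_orderOf ?_ hz (isOfFinOrder_of_finite z)
  rintro z hz ⟨p, k, hp, hk, hpk⟩
  have : Fact p.Prime := ⟨hp.nat_prime⟩
  by_cases hpq : p = q
  · subst hpq
    exact le_normalizer (Q.mem_of_mem_of_isNilpotent hz hpk.symm)
  refine centralizer_le_normalizer _ (mem_centralizer_iff.mpr fun x hx => ?_)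
  obtain ⟨j, hj⟩ := IsPGroup.iff_orderOf.mp Q.isPGroup' ⟨x, hx⟩
  rw [Subgroup.orderOf_mk, ← Subgroup.orderOf_coe] at hj
  exact Subtype.ext (hG.commute_of_mem_commutator_commutator hpq hz hpk.symm
    (mem_closure_commutatorsOfPowOrder x.2 hj)).symm.eq

theorem isNilpotent_commutator [Finite G] [Group.IsSolvable G]
    (hG : CoprimeCommutatorOrdersMultiply G) :
    Group.IsNilpotent (commutator G) := by
  induction hn : Nat.card G using Nat.strong_induction_on generalizing G with
  | _ n ih =>
  rcases subsingleton_or_nontrivial G with _ | _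
  · infer_instance
  have hlt : Nat.card (commutator G) < n := hn ▸ (card_le_card_group _).lt_of_ne
    ((card_eq_iff_eq_top _).not.mpr (Group.IsSolvable.commutator_lt_top_of_nontrivial G).ne)
  have := ih _ hlt (hG.subgroup _) rfl
  exact hG.isNilpotent_commutator_of_isNilpotent

end CoprimeCommutatorOrdersMultiply

end

theorem soluble_case (G : Type*) [Group G] [Finite G]
    (h : ∀ a b : G, (∃ x y : G, a = ⁅x, y⁆) → (∃ x y : G, b = ⁅x, y⁆) →
      Nat.Coprime (orderOf a) (orderOf b) →
      orderOf (a * b) = orderOf a * orderOf b)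
    (hsol : IsSolvable G) :
    Group.IsNilpotent (commutator G) :=
  have : Group.IsSolvable G := hsol
  CoprimeCommutatorOrdersMultiply.isNilpotent_commutator h
end

section
/- Let G be a finite group, p a prime, and P a Sylow p-subgroup of the commutator subgroup G'. Then P is generated by the set of elements of P that are commutators in G. -/
/-!
A Sylow `p`-subgroup of `G'` is `G' ⊓ Q` for a Sylow `p`-subgroup `Q` of `G`, and by the focal
subgroup theorem `G' ⊓ Q` is generated by the commutators `⁅x, u⁆` with `x ∈ Q` that lie in `Q`.
-/

open scoped commutatorElement

open Subgroup

theorem Sylow.exists_inf_eq_map_subtype {G : Type*} [Group G] {p : ℕ} {H : Subgroup G}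
    (P : Sylow p H) : ∃ Q : Sylow p G, H ⊓ Q = (P : Subgroup H).map H.subtype := by
  obtain ⟨Q, hQ⟩ := P.exists_comap_subtype_eq
  exact ⟨Q, by rw [← hQ, map_comap_eq, range_subtype]⟩

theorem Sylow.commutator_inf_eq_closure_commutators {G : Type*} [Group G] [Finite G] {p : ℕ}
    [Fact p.Prime] (P : Sylow p G) :
    commutator G ⊓ P = closure {g : G | g ∈ P ∧ ∃ x y : G, g = ⁅x, y⁆} := by
  refine le_antisymm ?_ (closure_le _ |>.mpr ?_)
  · rw [commutator_inf_eq_focalSubgroup, focalSubgroup_def]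
    exact closure_mono fun g ⟨hgP, x, _, u, hg⟩ => ⟨hgP, x, u, hg⟩
  · rintro g ⟨hgP, x, y, rfl⟩
    exact ⟨commutator_mem_commutator (mem_top x) (mem_top y), hgP⟩

theorem sylow_of_derived_generated_by_commutators (G : Type*) [Group G] [Finite G]
    (p : ℕ) [Fact p.Prime] (P : Sylow p (commutator G)) :
    Subgroup.map (commutator G).subtype (P : Subgroup (commutator G)) =
      Subgroup.closure {g : G |
        g ∈ Subgroup.map (commutator G).subtype (P : Subgroup (commutator G)) ∧
        ∃ x y : G, g = ⁅x, y⁆} := by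
  obtain ⟨Q, hQ⟩ := P.exists_inf_eq_map_subtype
  rw [← hQ]
  nth_rw 1 [Q.commutator_inf_eq_closure_commutators]
  refine congrArg Subgroup.closure (Set.ext fun g => ?_)
  simp only [Set.mem_ofPred_eq, mem_inf]
  constructor
  · rintro ⟨hgQ, x, y, rfl⟩
    exact ⟨⟨commutator_mem_commutator (mem_top x) (mem_top y), hgQ⟩, x, y, rfl⟩
  · rintro ⟨⟨-, hgQ⟩, hg⟩
    exact ⟨hgQ, hg⟩
end

section
/- Let H be a finite 2-group of nilpotency class at most 2 with H' ≤ Z, where Z is a central subgroup of an ambient group G containing H, and let b ∈ N_G(H) be of odd order with [H, b] ⊄ Z. Then there exists d ∈ [H, b] with d ∉ Z and d² ∈ Z, and the commutator [d, b] is a 2-element which is a commutator of order 2 modulo Z. -/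
/-!
Modulo `Z` the image `Ā` of `H` is an abelian `2`-group, and conjugation by `b` acts on it with
order dividing the odd number `m = orderOf b`. The norm map `a ↦ ∏_{i<m} bⁱ a b⁻ⁱ` kills every
`a (b a b⁻¹)⁻¹ = ⁅a, b⁆`, hence all of `[Ā, b]`, and is `a ↦ aᵐ` on elements commuting with `b`;
since `m` is odd, `[Ā, b]` meets the centralizer of `b` trivially. So if `d ∈ [H, b]` is a power
of some `⁅h, b⁆ ∉ Z` with `dZ` of order `2`, then `⁅d, b⁆ ∉ Z`, and `⁅d, b⁆Z` is the product of the
two commuting involutions `dZ` and `(b d b⁻¹)⁻¹Z`.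
-/

open scoped commutatorElement

section Norm
variable {A : Type*} [CommGroup A]

def endNorm (σ : Monoid.End A) (m : ℕ) : A →* A := ∏ i ∈ Finset.range m, (σ ^ i : Monoid.End A)

theorem endNorm_apply (σ : Monoid.End A) (m : ℕ) (a : A) :
    endNorm σ m a = ∏ i ∈ Finset.range m, (σ ^ i) a :=
  MonoidHom.finsetProd_apply _ _ _

theorem endNorm_apply_self {σ : Monoid.End A} {m : ℕ} (hσ : σ ^ m = 1) (a : A) :
    endNorm σ m (σ a) = endNorm σ m a := by
  have hpow : ∀ i, (σ ^ i) (σ a) = (σ ^ (i + 1)) a := fun i => by rw [pow_succ]; rfl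
  simp only [endNorm_apply, hpow]
  apply mul_right_cancel (b := a)
  calc (∏ i ∈ Finset.range m, (σ ^ (i + 1)) a) * (σ ^ 0) a
      = (∏ i ∈ Finset.range m, (σ ^ i) a) * (σ ^ m) a := by
        exact (Finset.prod_range_succ' (fun i => (σ ^ i) a) m).symm.trans
          (Finset.prod_range_succ _ m)
    _ = (∏ i ∈ Finset.range m, (σ ^ i) a) * a := by rw [hσ]; rfl

theorem endNorm_apply_of_apply_eq {σ : Monoid.End A} {a : A} (ha : σ a = a) (m : ℕ) :
    endNorm σ m a = a ^ m := by
  have hfix : ∀ i, (σ ^ i) a = a := fun i => by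
    rw [Monoid.End.coe_pow, Function.iterate_fixed ha]
  simp [endNorm_apply, hfix]

theorem closure_range_div_le_ker_endNorm {σ : Monoid.End A} {m : ℕ} (hσ : σ ^ m = 1) :
    Subgroup.closure (Set.range fun x => x / σ x) ≤ (endNorm σ m).ker := by
  rw [Subgroup.closure_le]
  rintro _ ⟨x, rfl⟩
  simp [endNorm_apply_self hσ]

theorem pow_eq_one_of_mem_closure_range_div {σ : Monoid.End A} {m : ℕ} (hσ : σ ^ m = 1) {a : A}
    (ha : a ∈ Subgroup.closure (Set.range fun x => x / σ x)) (hfix : σ a = a) : a ^ m = 1 := by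
  rw [← endNorm_apply_of_apply_eq hfix]
  exact closure_range_div_le_ker_endNorm hσ ha

end Norm

theorem Subgroup.normal_of_le_center {G : Type*} [Group G] {Z : Subgroup G}
    (hZ : Z ≤ Subgroup.center G) : Z.Normal :=
  ⟨fun z hz g => by rwa [Subgroup.mem_center_iff.mp (hZ hz) g, mul_inv_cancel_right]⟩

theorem commutatorElement_mem_of_mem_normalizer {G : Type*} [Group G] {H : Subgroup G} {b h : G}
    (hb : b ∈ Subgroup.normalizer (H : Set G)) (hh : h ∈ H) : ⁅h, b⁆ ∈ H := by
  rw [commutatorElement_def, mul_assoc h, mul_assoc h]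
  exact mul_mem hh ((Subgroup.mem_normalizer_iff.mp hb _).mp (inv_mem hh))

theorem IsPGroup.exists_pow_eq_one_of_mem {G : Type*} [Group G] {p : ℕ} {H : Subgroup G}
    (hH : IsPGroup p H) {g : G} (hg : g ∈ H) : ∃ k, g ^ p ^ k = 1 := by
  obtain ⟨k, hk⟩ := hH ⟨g, hg⟩
  exact ⟨k, by simpa using congrArg Subtype.val hk⟩

theorem exists_pow_pow_notMem_and_pow_mem {M : Type*} [Monoid M] {s : Set M} {x : M} {p n : ℕ}
    (hx : x ∉ s) (hn : x ^ p ^ n ∈ s) : ∃ j, x ^ p ^ j ∉ s ∧ (x ^ p ^ j) ^ p ∈ s := by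
  induction n with
  | zero => simp_all
  | succ n ih =>
    by_cases h : x ^ p ^ n ∈ s
    · exact ih h
    · exact ⟨n, h, by rwa [← pow_mul, ← pow_succ]⟩

theorem commutatorElement_sq_eq_one {G : Type*} [Group G] {x b : G}
    (hcomm : Commute x (b * x * b⁻¹)) (hx : x ^ 2 = 1) : ⁅x, b⁆ ^ 2 = 1 := by
  have hconj : (b * x * b⁻¹) ^ 2 = 1 := by
    rw [← MulAut.conj_apply, ← map_pow, hx, map_one]
  rw [commutatorElement_def, show x * b * x⁻¹ * b⁻¹ = x * (b * x * b⁻¹)⁻¹ by group,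
    hcomm.inv_right.mul_pow, inv_pow, hx, hconj, inv_one, mul_one]

theorem commutatorElement_sq_mem {G : Type*} [Group G] {Z : Subgroup G} [Z.Normal] {x b : G}
    (hcomm : ⁅x, b * x * b⁻¹⁆ ∈ Z) (hx : x ^ 2 ∈ Z) : ⁅x, b⁆ ^ 2 ∈ Z := by
  set π := QuotientGroup.mk' Z
  have hπ : ∀ g, π g = 1 ↔ g ∈ Z := QuotientGroup.eq_one_iff
  rw [← hπ, map_pow, map_commutatorElement]
  rw [← hπ, map_commutatorElement, commutatorElement_eq_one_iff_commute, map_mul, map_mul,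
    map_inv] at hcomm
  rw [← hπ, map_pow] at hx
  exact commutatorElement_sq_eq_one hcomm hx

open scoped IsMulCommutative in
theorem pow_eq_one_of_mem_closure_commutatorElement {G : Type*} [Group G] {A : Subgroup G}
    [IsMulCommutative A] {b : G} (hb : b ∈ Subgroup.normalizer (A : Set G)) {m : ℕ}
    (hbm : b ^ m = 1) {a : G} (ha : a ∈ Subgroup.closure {c | ∃ x ∈ A, c = ⁅x, b⁆})
    (hab : Commute a b) : a ^ m = 1 := by
  let σ : Monoid.End A := MulDistribMulAction.toMonoidEnd _ A (⟨b, hb⟩ : Subgroup.normalizer A)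
  have hσ : σ ^ m = 1 := by
    rw [← map_pow, show (⟨b, hb⟩ : Subgroup.normalizer A) ^ m = 1 from Subtype.ext hbm, map_one]
  have hcoe : ∀ x : A, ((x / σ x : A) : G) = ⁅(x : G), b⁆ := fun x => by
    simp only [Subgroup.coe_div, commutatorElement_def]
    show x / (b * x * b⁻¹) = _
    simp only [div_eq_mul_inv, mul_inv_rev, inv_inv, mul_assoc]
  have hset : {c | ∃ x ∈ A, c = ⁅x, b⁆} = A.subtype '' Set.range fun x => x / σ x := by
    ext c
    constructor
    · rintro ⟨x, hx, rfl⟩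
      exact ⟨⟨x, hx⟩ / σ ⟨x, hx⟩, ⟨_, rfl⟩, hcoe _⟩
    · rintro ⟨_, ⟨x, rfl⟩, rfl⟩
      exact ⟨x, x.2, hcoe x⟩
  rw [hset, ← MonoidHom.map_closure] at ha
  obtain ⟨a, ha, rfl⟩ := ha
  have hfix : σ a = a := Subtype.ext <| show b * a * b⁻¹ = a by
    rw [mul_inv_eq_iff_eq_mul]; exact hab.eq.symm
  simpa using congrArg Subtype.val (pow_eq_one_of_mem_closure_range_div hσ ha hfix)

theorem mem_of_commutatorElement_mem_of_mem_closure {G : Type*} [Group G] {Z : Subgroup G}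
    [Z.Normal] {H : Subgroup G} {p : ℕ} (hH : IsPGroup p H)
    (hH' : ∀ h₁ ∈ H, ∀ h₂ ∈ H, ⁅h₁, h₂⁆ ∈ Z) {b : G} (hb : b ∈ Subgroup.normalizer (H : Set G))
    (hcop : p.Coprime (orderOf b)) {d : G}
    (hd : d ∈ Subgroup.closure {c : G | ∃ h ∈ H, c = ⁅h, b⁆}) (hdb : ⁅d, b⁆ ∈ Z) : d ∈ Z := by
  set π := QuotientGroup.mk' Z
  have hπ : ∀ g, π g = 1 ↔ g ∈ Z := QuotientGroup.eq_one_iff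
  have hA : IsMulCommutative (H.map π) := by
    refine ⟨⟨?_⟩⟩
    rintro ⟨_, x, hx, rfl⟩ ⟨_, y, hy, rfl⟩
    apply Subtype.ext
    show π x * π y = π y * π x
    rw [← commutatorElement_eq_one_iff_mul_comm, ← map_commutatorElement, hπ]
    exact hH' x hx y hy
  have hπd : π d ∈ Subgroup.closure {c | ∃ x ∈ H.map π, c = ⁅x, π b⁆} := by
    have himage : π '' {c : G | ∃ h ∈ H, c = ⁅h, b⁆} = {c | ∃ x ∈ H.map π, c = ⁅x, π b⁆} := by
      ext c
      simp [map_commutatorElement, eq_comm]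
    rw [← himage, ← MonoidHom.map_closure]
    exact Subgroup.mem_map_of_mem π hd
  have hdm : π d ^ orderOf b = 1 :=
    pow_eq_one_of_mem_closure_commutatorElement (Subgroup.le_normalizer_map π ⟨b, hb, rfl⟩)
      (by rw [← map_pow, pow_orderOf_eq_one, map_one]) hπd
      (by rw [← commutatorElement_eq_one_iff_commute, ← map_commutatorElement, hπ]; exact hdb)
  have hdH : d ∈ H := (Subgroup.closure_le H).mpr
    (by rintro _ ⟨h, hh, rfl⟩; exact commutatorElement_mem_of_mem_normalizer hb hh) hd
  obtain ⟨k, hk⟩ := hH.exists_pow_eq_one_of_mem hdH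
  rw [← hπ, ← pow_eq_one_iff_of_coprime (hcop.pow_left k), ← map_pow, hk, map_one]
  exact ⟨rfl, hdm⟩

theorem exists_square_central_commutator_general (G : Type*) [Group G]
    (Z : Subgroup G) (hZ : Z ≤ Subgroup.center G)
    (H : Subgroup G) (hH2 : IsPGroup 2 H)
    (hH' : ∀ h₁ ∈ H, ∀ h₂ ∈ H, ⁅h₁, h₂⁆ ∈ Z)
    (b : G) (hb : b ∈ Subgroup.normalizer (H : Set G)) (hodd : Odd (orderOf b))
    (hnc : ∃ h ∈ H, ⁅h, b⁆ ∉ Z) :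
    ∃ d ∈ Subgroup.closure {c : G | ∃ h ∈ H, c = ⁅h, b⁆},
      d ∉ Z ∧ d ^ 2 ∈ Z ∧
      (∃ x y : G, ⁅d, b⁆ = ⁅x, y⁆) ∧
      (∃ n : ℕ, orderOf ⁅d, b⁆ = 2 ^ n) ∧
      ⁅d, b⁆ ∉ Z ∧ ⁅d, b⁆ ^ 2 ∈ Z := by
  have : Z.Normal := Subgroup.normal_of_le_center hZ
  obtain ⟨h, hh, hhb⟩ := hnc
  have hhbH : ⁅h, b⁆ ∈ H := commutatorElement_mem_of_mem_normalizer hb hh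
  have hhbD : ⁅h, b⁆ ∈ Subgroup.closure {c : G | ∃ h ∈ H, c = ⁅h, b⁆} :=
    Subgroup.subset_closure ⟨h, hh, rfl⟩
  obtain ⟨n, hn⟩ := hH2.exists_pow_eq_one_of_mem hhbH
  obtain ⟨j, hdZ, hd2⟩ :=
    exists_pow_pow_notMem_and_pow_mem (s := Z) hhb (by rw [hn]; exact one_mem Z)
  set d := ⁅h, b⁆ ^ 2 ^ j
  have hdH : d ∈ H := pow_mem hhbH _
  have hdbH : ⁅d, b⁆ ∈ H := commutatorElement_mem_of_mem_normalizer hb hdH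
  refine ⟨d, pow_mem hhbD _, hdZ, hd2, ⟨d, b, rfl⟩, ?_, fun hdbZ => hdZ ?_, ?_⟩
  · simpa using IsPGroup.iff_orderOf.mp hH2 ⟨_, hdbH⟩
  · exact mem_of_commutatorElement_mem_of_mem_closure hH2 hH' hb
      (Nat.coprime_two_left.mpr hodd) (pow_mem hhbD _) hdbZ
  · exact commutatorElement_sq_mem
      (hH' d hdH _ ((Subgroup.mem_normalizer_iff.mp hb d).mp hdH)) hd2

theorem exists_square_central_commutator (G : Type*) [Group G] [Finite G]
    (Z : Subgroup G) (hZ : Z ≤ Subgroup.center G)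
    (H : Subgroup G) (hH2 : IsPGroup 2 H)
    (hclass : upperCentralSeries (↥H) 2 = ⊤)
    (hH' : ∀ h₁ ∈ H, ∀ h₂ ∈ H, ⁅h₁, h₂⁆ ∈ Z)
    (b : G) (hb : b ∈ Subgroup.normalizer (H : Set G)) (hodd : Odd (orderOf b))
    (hnc : ∃ h ∈ H, ⁅h, b⁆ ∉ Z) :
    ∃ d ∈ Subgroup.closure {c : G | ∃ h ∈ H, c = ⁅h, b⁆},
      d ∉ Z ∧ d ^ 2 ∈ Z ∧
      (∃ x y : G, ⁅d, b⁆ = ⁅x, y⁆) ∧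
      (∃ n : ℕ, orderOf ⁅d, b⁆ = 2 ^ n) ∧
      ⁅d, b⁆ ∉ Z ∧ ⁅d, b⁆ ^ 2 ∈ Z :=
  exists_square_central_commutator_general G Z hZ H hH2 hH' b hb hodd hnc
end

section
/- Let G be a finite quasisimple group and a ∈ G a 2-element with a ∉ Z(G) and a² ∈ Z(G). Then there exists t ∈ G such that the commutator [a, t] has odd order different from 1. -/
/-!
Since `a²` is central, `a` inverts every commutator `⁅a, g⁆`. So if the order of some `⁅a, g⁆`
has an odd prime factor `q`, the power `d` of `⁅a, g⁆` of order `q` gives `⁅a, d⁆ = d⁻²`, again of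
order `q`. Otherwise the image `ā` of `a` in `G ⧸ Z(G)` is an involution any two conjugates of
which have a product of 2-power order, hence generate a dihedral 2-group. By the Baer–Suzuki
theorem the conjugates of `ā` then generate a normal 2-subgroup, which is all of `G ⧸ Z(G)` by
simplicity. A simple 2-group is cyclic, and `G ⧸ Z(G)` cyclic forces `G` to be abelian,
contradicting `a ∉ Z(G)`.

Baer–Suzuki is proved as by Alperin–Lyons: among pairs of distinct maximal `p`-subgroups generated
by elements of `K`, take `W₁, W₂` with `K ∩ W₁ ∩ W₂` maximal, generating `D`. The normalizer
condition in `Wᵢ` yields `yᵢ ∈ K ∩ Wᵢ` outside `D` normalizing `D`, so `⟨y₁, y₂⟩ D` is again a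
`p`-subgroup generated by elements of `K`. A maximal one above it meets both `W₁` and `W₂` in more
of `K`, so it equals both of them.
-/

open scoped commutatorElement

open Subgroup

theorem NormalizerCondition.exists_mem_normalizer_of_lt {G : Type*} [Group G]
    {H P : Subgroup G} (hP : NormalizerCondition P) (hHP : H < P) :
    ∃ g ∈ P, g ∉ H ∧ g ∈ normalizer (H : Set G) := by
  have hlt : H.subgroupOf P < ⊤ := by
    rw [lt_top_iff_ne_top, Ne, subgroupOf_eq_top]
    exact hHP.not_ge
  obtain ⟨g, hgN, hgH⟩ := SetLike.exists_of_lt (hP _ hlt)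
  rw [← subgroupOf_normalizer_eq hHP.le, mem_subgroupOf] at hgN
  exact ⟨g, g.2, fun h => hgH (mem_subgroupOf.mpr h), hgN⟩

theorem NormalizerCondition.exists_notMem_mem_normalizer {G : Type*} [Group G] [Finite G]
    {P D : Subgroup G} (hP : NormalizerCondition P) (hDP : D ≤ P) {Y : Set G}
    (hY : ∀ g ∈ P, ∀ y ∈ Y, g * y * g⁻¹ ∈ Y) (hD : closure (Y ∩ D) = D)
    (hYD : ¬ Y ∩ P ⊆ D) :
    ∃ y ∈ Y ∩ P, y ∉ D ∧ y ∈ normalizer (D : Set G) := by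
  by_contra! hYN
  set N := normalizer (D : Set G) ⊓ P
  have hNP : N < P := by
    refine lt_of_le_of_ne inf_le_right fun hNP => ?_
    obtain ⟨y, hy, hyD⟩ := Set.not_subset.mp hYD
    have hyN : y ∈ N := by rw [hNP]; exact hy.2
    exact hYN y hy hyD hyN.1
  obtain ⟨g, hgP, hgN, hgNN⟩ := hP.exists_mem_normalizer_of_lt hNP
  have hDN : D ≤ N := le_inf le_normalizer hDP
  -- `g` conjugates the generators `Y ∩ D` of `D` into `Y ∩ N`, which `hYN` puts inside `D`.
  have hconj : D ≤ D.comap (MulAut.conj g).toMonoidHom := by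
    calc D = closure (Y ∩ D) := hD.symm
      _ ≤ _ := closure_le _ |>.mpr fun y ⟨hyY, hyD⟩ => by
        have hgy : g * y * g⁻¹ ∈ N := (mem_normalizer_iff.mp hgNN y).mp (hDN hyD)
        by_contra hgyD
        exact hYN _ ⟨hY g hgP y hyY, hgy.2⟩ hgyD hgy.1
  exact hgN ⟨mem_normalizer_fintype fun d hd => hconj hd, hgP⟩

section BaerSuzuki

variable {X : Type*} [Group X] {p : ℕ} {K : Set X}

def IsPSubgroupGeneratedBy (p : ℕ) (K : Set X) (Q : Subgroup X) : Prop :=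
  IsPGroup p Q ∧ closure (K ∩ Q) = Q

theorem isPSubgroupGeneratedBy_closure {T : Set X} (hTK : T ⊆ K) (hT : IsPGroup p (closure T)) :
    IsPSubgroupGeneratedBy p K (closure T) :=
  ⟨hT, le_antisymm (closure_le _ |>.mpr Set.inter_subset_right)
    (closure_mono fun _ ht => ⟨hTK ht, subset_closure ht⟩)⟩

theorem not_inter_subset_of_maximal {A B : Subgroup X}
    (hA : Maximal (IsPSubgroupGeneratedBy p K) A) (hB : IsPSubgroupGeneratedBy p K B)
    (hAB : A ≠ B) : ¬ K ∩ A ⊆ B := fun hKA =>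
  hAB <| hA.eq_of_le hB <| hA.prop.2 ▸ closure_le _ |>.mpr hKA

variable [Finite X]

theorem exists_maximal_ne_of_forall_maximal_not_subset
    (hpair : ∀ x ∈ K, ∀ y ∈ K, IsPGroup p (closure {x, y}))
    (hK : ∀ W, Maximal (IsPSubgroupGeneratedBy p K) W → ¬ K ⊆ W) :
    ∃ W₁ W₂, Maximal (IsPSubgroupGeneratedBy p K) W₁ ∧
      Maximal (IsPSubgroupGeneratedBy p K) W₂ ∧ W₁ ≠ W₂ := by
  obtain ⟨W₀, -, hW₀⟩ := Finite.exists_le_maximal (isPSubgroupGeneratedBy_closure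
    (Set.empty_subset K) (closure_empty (G := X) ▸ IsPGroup.of_bot))
  obtain ⟨x, hxK, hxW₀⟩ := Set.not_subset.mp (hK W₀ hW₀)
  have hx := hpair x hxK x hxK
  rw [Set.pair_eq_singleton] at hx
  obtain ⟨W, hxW, hW⟩ := Finite.exists_le_maximal
    (isPSubgroupGeneratedBy_closure (Set.singleton_subset_iff.mpr hxK) hx)
  exact ⟨W₀, W, hW₀, hW, fun h => hxW₀ (h ▸ hxW (subset_closure rfl))⟩

variable [Fact p.Prime]

theorem exists_notMem_mem_normalizer_closure_inter
    (hK : ∀ g : X, ∀ x ∈ K, g * x * g⁻¹ ∈ K) {A B : Subgroup X}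
    (hA : Maximal (IsPSubgroupGeneratedBy p K) A) (hB : IsPSubgroupGeneratedBy p K B)
    (hAB : A ≠ B) :
    ∃ y ∈ K ∩ A, y ∉ B ∧ y ∈ normalizer (closure (K ∩ A ∩ B) : Set X) := by
  set D := closure (K ∩ A ∩ B)
  have hDA : D ≤ A := closure_le _ |>.mpr fun _ hx => hx.1.2
  have hDB : D ≤ B := closure_le _ |>.mpr fun _ hx => hx.2
  have hD : closure (K ∩ D) = D := le_antisymm (closure_le _ |>.mpr Set.inter_subset_right)
    (closure_mono fun x hx => ⟨hx.1.1, subset_closure hx⟩)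
  have := hA.prop.1.isNilpotent
  have hKA : ¬ K ∩ A ⊆ D := fun hKA =>
    not_inter_subset_of_maximal hA hB hAB fun x hx => hDB (hKA hx)
  obtain ⟨y, hy, hyD, hyN⟩ := NormalizerCondition.exists_notMem_mem_normalizer
    Group.normalizerCondition_of_isNilpotent hDA (fun g _ => hK g) hD hKA
  exact ⟨y, hy, fun hyB => hyD (subset_closure ⟨hy, hyB⟩), hyN⟩

theorem isPGroup_closure_of_forall_pair (hK : ∀ g : X, ∀ x ∈ K, g * x * g⁻¹ ∈ K)
    (hpair : ∀ x ∈ K, ∀ y ∈ K, IsPGroup p (closure {x, y})) : IsPGroup p (closure K) := by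
  by_contra hKp
  have hmiss : ∀ W, Maximal (IsPSubgroupGeneratedBy p K) W → ¬ K ⊆ W :=
    fun W hW hKW => hKp (hW.prop.1.to_le (closure_le _ |>.mpr hKW))
  obtain ⟨⟨W₁, W₂⟩, ⟨hW₁, hW₂, hW₁₂⟩, hmax⟩ := Set.Finite.exists_maximalFor
    (fun q : Subgroup X × Subgroup X => K ∩ q.1 ∩ q.2)
    {q | Maximal (IsPSubgroupGeneratedBy p K) q.1 ∧ Maximal (IsPSubgroupGeneratedBy p K) q.2 ∧
      q.1 ≠ q.2} (Set.toFinite _)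
    (by
      obtain ⟨V₁, V₂, hV⟩ := exists_maximal_ne_of_forall_maximal_not_subset hpair hmiss
      exact ⟨(V₁, V₂), hV⟩)
  obtain ⟨y₁, hy₁, hy₁W₂, hy₁N⟩ :=
    exists_notMem_mem_normalizer_closure_inter hK hW₁ hW₂.prop hW₁₂
  obtain ⟨y₂, hy₂, hy₂W₁, hy₂N⟩ :=
    exists_notMem_mem_normalizer_closure_inter hK hW₂ hW₁.prop hW₁₂.symm
  rw [Set.inter_right_comm] at hy₂N
  have hQ : IsPSubgroupGeneratedBy p K (closure ({y₁, y₂} ∪ (K ∩ W₁ ∩ W₂))) := by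
    refine isPSubgroupGeneratedBy_closure
      (Set.union_subset (Set.insert_subset hy₁.1 (Set.singleton_subset_iff.mpr hy₂.1))
        fun x hx => hx.1.1) ?_
    rw [Subgroup.closure_union]
    refine (hpair y₁ hy₁.1 y₂ hy₂.1).to_sup_of_normal_right' (hW₁.prop.1.to_le ?_) ?_
    · exact closure_le _ |>.mpr fun x hx => hx.1.2
    · exact closure_le _ |>.mpr (Set.insert_subset hy₁N (Set.singleton_subset_iff.mpr hy₂N))
  obtain ⟨W₃, hQW₃, hW₃⟩ := Finite.exists_le_maximal hQ
  have hDW₃ : K ∩ W₁ ∩ W₂ ⊆ W₃ := fun x hx => hQW₃ (subset_closure (Or.inr hx))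
  have heq : ∀ A, Maximal (IsPSubgroupGeneratedBy p K) A → K ∩ W₁ ∩ W₂ ⊆ A →
      ∀ y ∈ K ∩ A, y ∉ K ∩ W₁ ∩ W₂ → y ∈ W₃ → A = W₃ := by
    intro A hA hA₁₂ y hyA hy hyW₃
    by_contra hne
    exact hy (hmax (j := (A, W₃)) ⟨hA, hW₃, hne⟩
      (fun x hx => ⟨⟨hx.1.1, hA₁₂ hx⟩, hDW₃ hx⟩) ⟨hyA, hyW₃⟩)
  refine hW₁₂ ((heq W₁ hW₁ (fun x hx => hx.1.2) y₁ hy₁ (fun h => hy₁W₂ h.2) ?_).trans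
    (heq W₂ hW₂ (fun x hx => hx.2) y₂ hy₂ (fun h => hy₂W₁ h.1.2) ?_).symm)
  · exact hQW₃ (subset_closure (Or.inl (Set.mem_insert _ _)))
  · exact hQW₃ (subset_closure (Or.inl (Set.mem_insert_of_mem _ rfl)))

end BaerSuzuki

theorem isPGroup_two_closure_pair_of_sq_eq_one {G : Type*} [Group G] [Finite G] {x y : G}
    (hx : x ^ 2 = 1) (hy : y ^ 2 = 1) (hxy : ∃ s, orderOf (x * y) = 2 ^ s) :
    IsPGroup 2 (closure {x, y}) := by
  have : Fact (Nat.Prime 2) := ⟨Nat.prime_two⟩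
  obtain ⟨s, hs⟩ := hxy
  have hxinv : x⁻¹ = x := inv_eq_of_mul_eq_one_right (by rw [← pow_two, hx])
  have hyinv : y⁻¹ = y := inv_eq_of_mul_eq_one_right (by rw [← pow_two, hy])
  have hconj : x * (x * y) * x⁻¹ = (x * y)⁻¹ := by
    rw [mul_inv_rev, hxinv, hyinv, ← mul_assoc, ← pow_two, hx, one_mul]
  have hxN : zpowers x ≤ normalizer (zpowers (x * y) : Set G) := by
    refine zpowers_le.mpr (mem_normalizer_fintype fun n hn => ?_)
    obtain ⟨k, rfl⟩ := mem_zpowers_iff.mp hn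
    rw [← conj_zpow, hconj]
    exact zpow_mem (inv_mem (mem_zpowers _)) k
  have hxp : IsPGroup 2 (zpowers x) :=
    .of_card_dvd_pow (n := 1) (Nat.card_zpowers x ▸ orderOf_dvd_of_pow_eq_one hx)
  have hxyp : IsPGroup 2 (zpowers (x * y)) := .of_card (Nat.card_zpowers (x * y) ▸ hs)
  refine (hxp.to_sup_of_normal_right' hxyp hxN).to_le (closure_le _ |>.mpr ?_)
  refine Set.insert_subset_iff.mpr ⟨mem_sup_left (mem_zpowers x), ?_⟩
  have := mul_mem (mem_sup_left (inv_mem (mem_zpowers x)))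
    (mem_sup_right (S := zpowers x) (mem_zpowers (x * y)))
  rwa [inv_mul_cancel_left, ← SetLike.mem_coe, ← Set.singleton_subset_iff] at this

theorem IsSimpleGroup.isPGroup_two_of_forall_commutator {Q : Type*} [Group Q] [Finite Q]
    [IsSimpleGroup Q] {x : Q} (hx1 : x ≠ 1) (hx2 : x ^ 2 = 1)
    (hcomm : ∀ g : Q, ∃ s, orderOf ⁅x, g⁆ = 2 ^ s) : IsPGroup 2 Q := by
  have : Fact (Nat.Prime 2) := ⟨Nat.prime_two⟩
  have hxinv : x⁻¹ = x := inv_eq_of_mul_eq_one_right (by rw [← pow_two, hx2])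
  have hconjx : ∀ y ∈ Group.conjugatesOfSet {x}, ∃ h, h * x * h⁻¹ = y := fun y hy => by
    obtain ⟨_, hmem, hconj⟩ := Group.mem_conjugatesOfSet_iff.mp hy
    exact isConj_iff.mp (Set.mem_singleton_iff.mp hmem ▸ hconj)
  have hpair : ∀ y ∈ Group.conjugatesOfSet {x}, ∀ z ∈ Group.conjugatesOfSet {x},
      IsPGroup 2 (closure {y, z}) := by
    intro y hy z hz
    obtain ⟨h, rfl⟩ := hconjx y hy
    obtain ⟨h', rfl⟩ := hconjx z hz
    have hconj_sq : ∀ c : Q, (c * x * c⁻¹) ^ 2 = 1 := fun c => by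
      rw [conj_pow, hx2, mul_one, mul_inv_cancel]
    refine isPGroup_two_closure_pair_of_sq_eq_one (hconj_sq h) (hconj_sq h') ?_
    obtain ⟨s, hs⟩ := hcomm (h⁻¹ * h')
    have hprod : h * x * h⁻¹ * (h' * x * h'⁻¹) = MulAut.conj h ⁅x, h⁻¹ * h'⁆ := by
      rw [MulAut.conj_apply, commutatorElement_def, hxinv]
      group
    exact ⟨s, by rw [hprod, MulEquiv.orderOf_eq, hs]⟩
  have htop : normalClosure {x} = ⊤ :=
    (eq_bot_or_eq_top_of_normal _ normalClosure_normal).resolve_left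
      fun h => hx1 (mem_bot.mp (h ▸ subset_normalClosure (Set.mem_singleton x)))
  have := isPGroup_closure_of_forall_pair (fun g y hy => Group.conj_mem_conjugatesOfSet hy) hpair
  exact (htop ▸ this : IsPGroup 2 (⊤ : Subgroup Q)).of_equiv Subgroup.topEquiv

theorem conj_commutatorElement_eq_inv {G : Type*} [Group G] {a : G} (ha : a ^ 2 ∈ center G)
    (g : G) : a * ⁅a, g⁆ * a⁻¹ = ⁅a, g⁆⁻¹ := by
  have hg : g * a ^ 2 = a ^ 2 * g := mem_center_iff.mp ha g
  calc a * ⁅a, g⁆ * a⁻¹ = a ^ 2 * g * a⁻¹ * g⁻¹ * a⁻¹ := by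
        rw [commutatorElement_def, pow_two]; group
    _ = g * a ^ 2 * a⁻¹ * g⁻¹ * a⁻¹ := by rw [hg]
    _ = ⁅a, g⁆⁻¹ := by rw [commutatorElement_def]; group

theorem orderOf_commutatorElement_of_conj_eq_inv {G : Type*} [Group G] {a d : G}
    (h : a * d * a⁻¹ = d⁻¹) (hd : Odd (orderOf d)) : orderOf ⁅a, d⁆ = orderOf d := by
  rw [commutatorElement_def, h, ← mul_inv_rev, ← pow_two, orderOf_inv,
    (Nat.coprime_two_right.mpr hd).orderOf_pow]

theorem exists_odd_orderOf_commutatorElement {G : Type*} [Group G] [Finite G] {a g : G}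
    (ha : a ^ 2 ∈ center G) (hg : ¬ ∃ s, orderOf ⁅a, g⁆ = 2 ^ s) :
    ∃ t : G, Odd (orderOf ⁅a, t⁆) ∧ ⁅a, t⁆ ≠ 1 := by
  set c := ⁅a, g⁆
  obtain ⟨q, hq, hqc, hqodd⟩ :=
    (Nat.eq_two_pow_or_exists_odd_prime_and_dvd (orderOf c)).resolve_left fun ⟨s, hs⟩ => hg ⟨s, hs⟩
  set d := c ^ (orderOf c / q)
  have hd : orderOf d = q := orderOf_pow_orderOf_div (orderOf_pos c).ne' hqc
  have hconj : a * d * a⁻¹ = d⁻¹ := by rw [← conj_pow, conj_commutatorElement_eq_inv ha, inv_pow]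
  have hord : orderOf ⁅a, d⁆ = q :=
    (orderOf_commutatorElement_of_conj_eq_inv hconj (hd ▸ hqodd)).trans hd
  refine ⟨d, hord ▸ hqodd, fun h1 => hq.one_lt.ne' ?_⟩
  rw [← hord, h1, orderOf_one]

theorem baer_suzuki_application_general (G : Type*) [Group G] [Finite G]
    (hsimple : IsSimpleGroup (G ⧸ Subgroup.center G))
    (a : G)
    (hnz : a ∉ Subgroup.center G) (hsq : a ^ 2 ∈ Subgroup.center G) :
    ∃ t : G, Odd (orderOf ⁅a, t⁆) ∧ ⁅a, t⁆ ≠ 1 := by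
  by_contra hnone
  have h2 : ∀ g, ∃ s, orderOf ⁅a, g⁆ = 2 ^ s := fun g =>
    by_contra fun hg => hnone (exists_odd_orderOf_commutatorElement hsq hg)
  set π := QuotientGroup.mk' (center G)
  have hπ2 : ∀ g : G ⧸ center G, ∃ s, orderOf ⁅π a, g⁆ = 2 ^ s := by
    intro g
    obtain ⟨g, rfl⟩ := QuotientGroup.mk'_surjective _ g
    obtain ⟨s, hs⟩ := h2 g
    obtain ⟨s', -, hs'⟩ := (Nat.dvd_prime_pow Nat.prime_two).mp (hs ▸ orderOf_map_dvd π ⁅a, g⁆)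
    exact ⟨s', by rwa [map_commutatorElement] at hs'⟩
  have := hsimple
  have hQ : IsPGroup 2 (G ⧸ center G) :=
    IsSimpleGroup.isPGroup_two_of_forall_commutator (x := π a) (by simpa [π] using hnz)
      (by rw [← map_pow]; exact (QuotientGroup.eq_one_iff _).mpr hsq) hπ2
  have : Fact (Nat.Prime 2) := ⟨Nat.prime_two⟩
  have := hQ.isNilpotent
  have := isMulCommutative_of_isCyclic_quotient_center_self G
  exact hnz (center_eq_top (G := G) ▸ mem_top a)

theorem baer_suzuki_application (G : Type*) [Group G] [Finite G]
    (hperf : commutator G = ⊤) (hsimple : IsSimpleGroup (G ⧸ Subgroup.center G))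
    (a : G) (ha2 : ∃ n : ℕ, orderOf a = 2 ^ n)
    (hnz : a ∉ Subgroup.center G) (hsq : a ^ 2 ∈ Subgroup.center G) :
    ∃ t : G, Odd (orderOf ⁅a, t⁆) ∧ ⁅a, t⁆ ≠ 1 :=
  baer_suzuki_application_general G hsimple a hnz hsq
end

section
/- Let G be a finite group with G = G' and suppose the commutator subgroup of G/T is a q-group for a prime q, where T is a proper or improper subgroup of G containing, for every prime p ≠ q, all Sylow p-subgroups of G'. Then G = T. -/
/-! A perfect group has perfect quotients, so `G ⧸ T` is a perfect group whose commutator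
subgroup, hence the whole group, is a `q`-group. Finite `q`-groups are nilpotent and thus
solvable, and a solvable perfect group is trivial. -/

theorem commutator_eq_top_of_surjective {G H : Type*} [Group G] [Group H] {f : G →* H}
    (hf : Function.Surjective f) (hG : commutator G = ⊤) : commutator H = ⊤ := by
  rw [← derivedSeries_one, ← map_derivedSeries_eq hf, derivedSeries_one, hG,
    Subgroup.map_top_of_surjective f hf]

theorem Group.IsSolvable.subsingleton_of_commutator_eq_top {G : Type*} [Group G]
    [Group.IsSolvable G] (hG : commutator G = ⊤) : Subsingleton G :=
  not_nontrivial_iff_subsingleton.mp fun _ ↦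
    (IsSolvable.commutator_lt_top_of_nontrivial G).ne hG

theorem IsPGroup.of_commutator_eq_top {G : Type*} [Group G] {p : ℕ}
    (hG : commutator G = ⊤) (hp : IsPGroup p (commutator G)) : IsPGroup p G :=
  (hG ▸ hp).of_equiv Subgroup.topEquiv

theorem perfect_eq_of_quotient_derived_q_group_general (G : Type*) [Group G] [Finite G]
    (hperf : commutator G = ⊤) (q : ℕ) (hq : q.Prime)
    (T : Subgroup G) [hT : T.Normal]
    (hquot : IsPGroup q (commutator (G ⧸ T))) :
    T = ⊤ := by
  have : Fact q.Prime := ⟨hq⟩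
  have hperfQ : commutator (G ⧸ T) = ⊤ :=
    commutator_eq_top_of_surjective (QuotientGroup.mk'_surjective T) hperf
  have := (IsPGroup.of_commutator_eq_top hperfQ hquot).isNilpotent
  have := Group.IsSolvable.subsingleton_of_commutator_eq_top hperfQ
  exact QuotientGroup.subgroup_eq_top_of_subsingleton T ‹_›

theorem perfect_eq_of_quotient_derived_q_group (G : Type*) [Group G] [Finite G]
    (hperf : commutator G = ⊤) (q : ℕ) (hq : q.Prime)
    (T : Subgroup G) [hT : T.Normal]
    (hTsyl : ∀ p : ℕ, ∀ _ : Fact p.Prime, p ≠ q →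
      ∀ P : Sylow p (commutator G),
        Subgroup.map (commutator G).subtype (P : Subgroup (commutator G)) ≤ T)
    (hquot : IsPGroup q (commutator (G ⧸ T))) :
    T = ⊤ :=
  perfect_eq_of_quotient_derived_q_group_general G hperf q hq T (hT := hT) hquot
end
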